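/- arXiv:2202.06103 — 3 statements merged into one kernel-verified Lean document; each statement's English description precedes it below -/
import Mathlib

section
/- Let R be a von Neumann regular ring, M and N finitely generated projective R-modules, and μ : N → M a nonzero R-module homomorphism. Then μ is von Neumann regular, i.e., there exists θ : M → N with μ ∘ θ ∘ μ = μ. -/
/-!
A homomorphism between finitely generated projective modules is a retract of a homomorphism
`R^n → R^m`, and von Neumann regularity passes to retracts. Maps between finite free modules are
split one coordinate at a time: if `f₁ g₁ f₁ = f₁`, then `(f₁, f₂)` is regular as soon as the
residual map `f₂ (1 - g₁ f₁)` is, because `f₁ (1 - g₁ f₁) = 0`; dually for maps out of a product.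
This reduces everything to the endomorphisms `r ↦ r * a` of `R`, which are regular because `a` is.
-/

namespace LinearMap

section Semiring

variable {R M N M' N' : Type*} [Semiring R] [AddCommMonoid M] [AddCommMonoid N]
  [AddCommMonoid M'] [AddCommMonoid N'] [Module R M] [Module R N] [Module R M'] [Module R N']

def IsVonNeumannRegular (f : M →ₗ[R] N) : Prop :=
  ∃ g : N →ₗ[R] M, f ∘ₗ g ∘ₗ f = f

theorem isVonNeumannRegular_zero : (0 : M →ₗ[R] N).IsVonNeumannRegular :=
  ⟨0, zero_comp _⟩

theorem IsVonNeumannRegular.of_retract {f : M →ₗ[R] N} {iM : M →ₗ[R] M'} {pM : M' →ₗ[R] M}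
    {iN : N →ₗ[R] N'} {pN : N' →ₗ[R] N} (hM : pM ∘ₗ iM = id) (hN : pN ∘ₗ iN = id)
    (h : (iN ∘ₗ f ∘ₗ pM).IsVonNeumannRegular) : f.IsVonNeumannRegular := by
  obtain ⟨g, hg⟩ := h
  refine ⟨pM ∘ₗ g ∘ₗ iN, ext fun x => ?_⟩
  have hMx : pM (iM x) = x := congr($hM x)
  have hNy : ∀ y, pN (iN y) = y := fun y => congr($hN y)
  simpa [hMx, hNy] using congr(pN ($hg (iM x)))

theorem IsVonNeumannRegular.of_comp_equiv {f : M →ₗ[R] N} (e : M' ≃ₗ[R] M)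
    (h : (f ∘ₗ (e : M' →ₗ[R] M)).IsVonNeumannRegular) : f.IsVonNeumannRegular :=
  .of_retract (iN := id) (pN := id) e.comp_symm (id_comp _) (by rwa [id_comp])

theorem IsVonNeumannRegular.of_equiv_comp {f : M →ₗ[R] N} (e : N ≃ₗ[R] N')
    (h : ((e : N →ₗ[R] N') ∘ₗ f).IsVonNeumannRegular) : f.IsVonNeumannRegular :=
  .of_retract (iM := id) (pM := id) (id_comp _) e.symm_comp (by rwa [comp_id])

end Semiring

section Ring

variable {R M M₁ M₂ N N₁ N₂ : Type*} [Ring R] [AddCommGroup M] [AddCommGroup M₁]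
  [AddCommGroup M₂] [AddCommGroup N] [AddCommGroup N₁] [AddCommGroup N₂] [Module R M]
  [Module R M₁] [Module R M₂] [Module R N] [Module R N₁] [Module R N₂]

theorem IsVonNeumannRegular.prod {f₁ : M →ₗ[R] N₁} {f₂ : M →ₗ[R] N₂} {g₁ : N₁ →ₗ[R] M}
    (hg₁ : f₁ ∘ₗ g₁ ∘ₗ f₁ = f₁) (h : (f₂ ∘ₗ (id - g₁ ∘ₗ f₁)).IsVonNeumannRegular) :
    (f₁.prod f₂).IsVonNeumannRegular := by
  obtain ⟨g₂, hg₂⟩ := h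
  refine ⟨g₁ ∘ₗ fst R N₁ N₂ + (id - g₁ ∘ₗ f₁) ∘ₗ g₂ ∘ₗ (snd R N₁ N₂ - f₂ ∘ₗ g₁ ∘ₗ fst R N₁ N₂),
    ext fun x => Prod.ext ?_ ?_⟩
  · have hg₁' (y : M) : f₁ (g₁ (f₁ y)) = f₁ y := congr($hg₁ y)
    simp [hg₁']
  · have hg₂x := congr($hg₂ x)
    simp only [coe_comp, Function.comp_apply, sub_apply, id_coe, id_eq, map_sub, prod_apply,
      Function.prod_apply, add_apply, coe_fst, snd_apply, map_add, Prod.snd_add,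
      Prod.snd_sub] at hg₂x ⊢
    linear_combination (norm := abel) hg₂x

theorem IsVonNeumannRegular.coprod {f₁ : M₁ →ₗ[R] N} {f₂ : M₂ →ₗ[R] N} {g₁ : N →ₗ[R] M₁}
    (hg₁ : f₁ ∘ₗ g₁ ∘ₗ f₁ = f₁) (h : ((id - f₁ ∘ₗ g₁) ∘ₗ f₂).IsVonNeumannRegular) :
    (f₁.coprod f₂).IsVonNeumannRegular := by
  obtain ⟨g₂, hg₂⟩ := h
  refine ⟨(g₁ - g₁ ∘ₗ f₂ ∘ₗ g₂ ∘ₗ (id - f₁ ∘ₗ g₁)).prod (g₂ ∘ₗ (id - f₁ ∘ₗ g₁)),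
    prod_ext (ext fun x => ?_) (ext fun x => ?_)⟩
  · have hg₁' (y : M₁) : f₁ (g₁ (f₁ y)) = f₁ y := congr($hg₁ y)
    simp [hg₁']
  · have hg₂x := congr($hg₂ x)
    simp only [coe_comp, Function.comp_apply, sub_apply, id_coe, id_eq, map_sub, coe_inr,
      coprod_apply, map_zero, zero_add, prod_apply, Function.prod_apply, coprod_inr] at hg₂x ⊢
    linear_combination (norm := abel) hg₂x

end Ring

section VonNeumannRegularRing

variable {R : Type*} [Ring R] (hR : ∀ a : R, ∃ x : R, a * x * a = a)
include hR

theorem isVonNeumannRegular_self (f : R →ₗ[R] R) : f.IsVonNeumannRegular := by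
  obtain ⟨x, hx⟩ := hR (f 1)
  have hf (r : R) : f r = r * f 1 := by rw [← smul_eq_mul, ← map_smul, smul_eq_mul, mul_one]
  refine ⟨toSpanSingleton R R x, ext_ring ?_⟩
  change f (f 1 * x) = f 1
  rw [hf, hx]

theorem isVonNeumannRegular_finPi_self : ∀ {n : ℕ} (f : (Fin n → R) →ₗ[R] R),
    f.IsVonNeumannRegular
  | 0, f => Subsingleton.elim 0 f ▸ isVonNeumannRegular_zero
  | n + 1, f => by
    let e := Fin.consLinearEquiv R fun _ : Fin (n + 1) => R
    refine .of_comp_equiv e ?_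
    rw [← comp_id (f ∘ₗ _), ← coprod_inl_inr, comp_coprod]
    obtain ⟨g, hg⟩ := isVonNeumannRegular_self hR (f ∘ₗ e ∘ₗ inl R R (Fin n → R))
    exact .coprod hg (isVonNeumannRegular_finPi_self _)

theorem isVonNeumannRegular_finPi {n : ℕ} : ∀ {m : ℕ} (f : (Fin n → R) →ₗ[R] (Fin m → R)),
    f.IsVonNeumannRegular
  | 0, f => Subsingleton.elim 0 f ▸ isVonNeumannRegular_zero
  | m + 1, f => by
    let e := (Fin.consLinearEquiv R fun _ : Fin (m + 1) => R).symm
    refine .of_equiv_comp e ?_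
    rw [← id_comp (_ ∘ₗ f), ← pair_fst_snd, prod_comp]
    obtain ⟨g, hg⟩ := isVonNeumannRegular_finPi_self hR (fst R R (Fin m → R) ∘ₗ e ∘ₗ f)
    exact .prod hg (isVonNeumannRegular_finPi _)

end VonNeumannRegularRing

end LinearMap

theorem munn_vonNeumannRegular_hom_general
    {R M N : Type*} [Ring R] [AddCommGroup M] [AddCommGroup N]
    [Module R M] [Module R N]
    (hR : ∀ a : R, ∃ x : R, a * x * a = a)
    [Module.Finite R M] [Module.Projective R M]
    [Module.Finite R N] [Module.Projective R N]
    (μ : N →ₗ[R] M) :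
    ∃ θ : M →ₗ[R] N, μ ∘ₗ θ ∘ₗ μ = μ := by
  obtain ⟨m, pM, iM, -, -, hM⟩ := Module.Finite.exists_comp_eq_id_of_projective R M
  obtain ⟨n, pN, iN, -, -, hN⟩ := Module.Finite.exists_comp_eq_id_of_projective R N
  exact (LinearMap.isVonNeumannRegular_finPi hR (iM ∘ₗ μ ∘ₗ pN)).of_retract hN hM

/-- Over a von Neumann regular ring `R`, a nonzero homomorphism `μ : N → M` of finitely
generated projective `R`-modules is von Neumann regular: there is `θ` with `μ ∘ θ ∘ μ = μ`. -/
theorem munn_vonNeumannRegular_hom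
    {R M N : Type*} [Ring R] [AddCommGroup M] [AddCommGroup N]
    [Module R M] [Module R N]
    (hR : ∀ a : R, ∃ x : R, a * x * a = a)
    [Module.Finite R M] [Module.Projective R M]
    [Module.Finite R N] [Module.Projective R N]
    (μ : N →ₗ[R] M) (hμ : μ ≠ 0) :
    ∃ θ : M →ₗ[R] N, μ ∘ₗ θ ∘ₗ μ = μ :=
  munn_vonNeumannRegular_hom_general hR μ
end

section
/- The Munn algebra 𝕄(R, M, N, μ) has a multiplicative unit if and only if there are direct sum decompositions M ≅ M₁ ⊕ M₂ and N ≅ N₁ ⊕ N₂ such that Hom_R(M₂, N) = 0, Hom_R(M, N₂) = 0, and the composition pr₁ ∘ μ restricted to N₁ is an isomorphism N₁ → M₁. In that case the unit is the map M → N given by the inverse of this isomorphism (extended by zero). -/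
/-!
A unit `u` satisfies `u ∘ μ ∘ u = u`, so `μ ∘ u` and `u ∘ μ` are idempotents of `M` and `N`; their
ranges and kernels give the decompositions. The identities `a ∘ μ ∘ u = a` and `u ∘ μ ∘ a = a`
say that every `a : M → N` kills `ker (μ ∘ u)` and lands in `range (u ∘ μ)`, and `μ`, `u` restrict
to mutually inverse maps between `range (u ∘ μ)` and `range (μ ∘ u)`. Conversely, when every
`a` kills `M₂` and lands in `N₁`, both unit identities only involve `pr₁ ∘ μ` on `N₁`.
-/

open LinearMap Submodule

section

variable {R M N : Type*} [Ring R] [AddCommGroup M] [AddCommGroup N] [Module R M] [Module R N]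

section Complements

variable {M₁ M₂ : Submodule R M} {N₁ N₂ : Submodule R N}

theorem forall_linearMap_eq_zero_iff_le_ker (h : IsCompl M₁ M₂) :
    (∀ f : M₂ →ₗ[R] N, f = 0) ↔ ∀ a : M →ₗ[R] N, M₂ ≤ ker a := by
  refine ⟨fun hM₂ a x hx => ?_, fun hker f => ?_⟩
  · simpa using LinearMap.congr_fun (hM₂ (a ∘ₗ M₂.subtype)) ⟨x, hx⟩
  · ext x
    simpa using hker (f ∘ₗ M₂.projectionOnto M₁ h.symm) x.2

theorem forall_linearMap_eq_zero_iff_range_le (h : IsCompl N₁ N₂) :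
    (∀ f : M →ₗ[R] N₂, f = 0) ↔ ∀ a : M →ₗ[R] N, range a ≤ N₁ := by
  refine ⟨fun hN₂ a => ?_, fun hrange f => ?_⟩
  · rintro _ ⟨x, rfl⟩
    simpa using LinearMap.congr_fun (hN₂ (N₂.projectionOnto N₁ h.symm ∘ₗ a)) x
  · ext x
    exact Submodule.disjoint_def.1 h.disjoint _
      (hrange (N₂.subtype ∘ₗ f) ⟨x, rfl⟩) (f x).2

theorem apply_projection_of_le_ker (h : IsCompl M₁ M₂) {a : M →ₗ[R] N} (ha : M₂ ≤ ker a)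
    (x : M) : a (M₁.projection M₂ h x) = a x := by
  have := ha (sub_projection_mem h x)
  rwa [mem_ker, map_sub, sub_eq_zero, eq_comm] at this

end Complements

variable (μ : N →ₗ[R] M)

/-- `u` is a two-sided unit of the Munn algebra `𝕄(R, M, N, μ)`. -/
def IsMunnUnit (u : M →ₗ[R] N) : Prop :=
  ∀ a : M →ₗ[R] N, u ∘ₗ μ ∘ₗ a = a ∧ a ∘ₗ μ ∘ₗ u = a

namespace IsMunnUnit

variable {μ} {u : M →ₗ[R] N} (hu : IsMunnUnit μ u)
include hu

theorem comp_comp_self : u ∘ₗ μ ∘ₗ u = u := (hu u).1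

theorem isIdempotentElem_comp_self : IsIdempotentElem (μ ∘ₗ u) := by
  change μ ∘ₗ u ∘ₗ μ ∘ₗ u = μ ∘ₗ u
  rw [hu.comp_comp_self]

theorem isIdempotentElem_self_comp : IsIdempotentElem (u ∘ₗ μ) := by
  change u ∘ₗ μ ∘ₗ u ∘ₗ μ = u ∘ₗ μ
  rw [← LinearMap.comp_assoc μ u, ← LinearMap.comp_assoc, hu.comp_comp_self]

theorem ker_le (a : M →ₗ[R] N) : ker (μ ∘ₗ u) ≤ ker a := fun x hx => by
  rw [mem_ker, ← (hu a).2]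
  simpa using congr_arg a hx

theorem range_le (a : M →ₗ[R] N) : range a ≤ range (u ∘ₗ μ) := by
  rw [← (hu a).1, ← LinearMap.comp_assoc]
  exact range_comp_le_range _ _

theorem bijective_projectionOnto_comp :
    Function.Bijective ((range (μ ∘ₗ u)).projectionOnto (ker (μ ∘ₗ u))
      hu.isIdempotentElem_comp_self.isCompl ∘ₗ μ ∘ₗ (range (u ∘ₗ μ)).subtype) := by
  have hP := hu.isIdempotentElem_comp_self
  have hQ := hu.isIdempotentElem_self_comp
  have hpr (x : M) : ((range (μ ∘ₗ u)).projectionOnto (ker (μ ∘ₗ u)) hP.isCompl x : M) =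
      μ (u x) :=
    (LinearMap.congr_fun hP.eq_projection x).symm
  have hQ_fix (n : range (u ∘ₗ μ)) : u (μ n) = n := hQ.mem_range_iff.1 n.2
  refine ⟨fun n m hnm => ?_, fun m => ?_⟩
  · have hμ : μ n = μ m := by simpa [hpr, hQ_fix] using congr_arg Subtype.val hnm
    ext
    rw [← hQ_fix n, ← hQ_fix m, hμ]
  · have huu (x : M) : u (μ (u x)) = u x := LinearMap.congr_fun hu.comp_comp_self x
    refine ⟨⟨u m, hQ.mem_range_iff.2 (huu m)⟩, ?_⟩
    ext
    simpa [hpr, huu] using hP.mem_range_iff.1 m.2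

end IsMunnUnit

theorem isMunnUnit_of_isCompl {M₁ M₂ : Submodule R M} {N₁ N₂ : Submodule R N}
    (h₁ : IsCompl M₁ M₂) (h₂ : IsCompl N₁ N₂) (e : N₁ ≃ₗ[R] M₁)
    (hM₂ : ∀ f : M₂ →ₗ[R] N, f = 0) (hN₂ : ∀ f : M →ₗ[R] N₂, f = 0)
    (he : (e : N₁ →ₗ[R] M₁) = M₁.projectionOnto M₂ h₁ ∘ₗ μ ∘ₗ N₁.subtype) :
    IsMunnUnit μ (N₁.subtype ∘ₗ (e.symm : M₁ →ₗ[R] N₁) ∘ₗ M₁.projectionOnto M₂ h₁) := by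
  have he' (n : N₁) : M₁.projectionOnto M₂ h₁ (μ n) = e n := (LinearMap.congr_fun he n).symm
  intro a
  constructor
  · ext x
    have hn : a x ∈ N₁ := (forall_linearMap_eq_zero_iff_range_le h₂).1 hN₂ a ⟨x, rfl⟩
    simp [he' ⟨a x, hn⟩]
  · ext x
    have hker := (forall_linearMap_eq_zero_iff_le_ker h₁).1 hM₂ a
    simp only [LinearMap.coe_comp, Function.comp_apply, Submodule.coe_subtype]
    -- `a` factors through `pr₁`, and `pr₁ ∘ μ ∘ u = pr₁`
    rw [← apply_projection_of_le_ker h₁ hker, projection_apply, he', LinearEquiv.coe_coe,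
      LinearEquiv.apply_symm_apply, ← projection_apply, apply_projection_of_le_ker h₁ hker]

end

/-- The Munn algebra `𝕄(R, M, N, μ)` (that is, `Hom_R(M, N)` with `a ⋅ b = a ∘ μ ∘ b`) has a
multiplicative unit if and only if there are direct sum decompositions `M = M₁ ⊕ M₂`,
`N = N₁ ⊕ N₂` with `Hom_R(M₂, N) = 0`, `Hom_R(M, N₂) = 0`, and `pr₁ ∘ μ` restricted to `N₁`
an isomorphism `N₁ → M₁`.  Moreover, in that case the unit is the map `M → N` given by the
inverse of this isomorphism extended by zero. -/
theorem munn_has_unit_iff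
    {R M N : Type*} [Ring R] [AddCommGroup M] [AddCommGroup N]
    [Module R M] [Module R N] (μ : N →ₗ[R] M) :
    ((∃ u : M →ₗ[R] N, ∀ a : M →ₗ[R] N, (u ∘ₗ μ ∘ₗ a) = a ∧ (a ∘ₗ μ ∘ₗ u) = a) ↔
      ∃ (M₁ M₂ : Submodule R M) (N₁ N₂ : Submodule R N) (h₁ : IsCompl M₁ M₂)
        (_ : IsCompl N₁ N₂),
        (∀ f : M₂ →ₗ[R] N, f = 0) ∧ (∀ f : M →ₗ[R] N₂, f = 0) ∧
        Function.Bijective ((M₁.linearProjOfIsCompl M₂ h₁) ∘ₗ μ ∘ₗ N₁.subtype)) ∧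
    (∀ (M₁ M₂ : Submodule R M) (N₁ N₂ : Submodule R N) (h₁ : IsCompl M₁ M₂)
        (_ : IsCompl N₁ N₂) (e : N₁ ≃ₗ[R] M₁),
        (∀ f : M₂ →ₗ[R] N, f = 0) → (∀ f : M →ₗ[R] N₂, f = 0) →
        ((e : N₁ →ₗ[R] M₁) = (M₁.linearProjOfIsCompl M₂ h₁) ∘ₗ μ ∘ₗ N₁.subtype) →
        ∀ a : M →ₗ[R] N,
          ((N₁.subtype ∘ₗ (e.symm : M₁ →ₗ[R] N₁) ∘ₗ M₁.linearProjOfIsCompl M₂ h₁)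
              ∘ₗ μ ∘ₗ a) = a ∧
          (a ∘ₗ μ ∘ₗ
            (N₁.subtype ∘ₗ (e.symm : M₁ →ₗ[R] N₁) ∘ₗ M₁.linearProjOfIsCompl M₂ h₁)) = a) := by
  refine ⟨⟨fun ⟨u, (hu : IsMunnUnit μ u)⟩ => ?_,
      fun ⟨M₁, M₂, N₁, N₂, h₁, h₂, hM₂, hN₂, hbij⟩ => ?_⟩,
    fun M₁ M₂ N₁ N₂ h₁ h₂ e hM₂ hN₂ he => isMunnUnit_of_isCompl μ h₁ h₂ e hM₂ hN₂ he⟩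
  · have hM := hu.isIdempotentElem_comp_self.isCompl
    have hN := hu.isIdempotentElem_self_comp.isCompl
    exact ⟨_, _, _, _, hM, hN, (forall_linearMap_eq_zero_iff_le_ker hM).2 hu.ker_le,
      (forall_linearMap_eq_zero_iff_range_le hN).2 hu.range_le, hu.bijective_projectionOnto_comp⟩
  · exact ⟨_, isMunnUnit_of_isCompl μ h₁ h₂ (.ofBijective _ hbij) hM₂ hN₂ rfl⟩
end

section
/- Let A be a unital ring with orthogonal idempotents e₁, e₂ summing to 1, A_{ij} = e_i A e_j, and P a progenerator of Mod-A₁₁. Then End_A((P ⊗_{A₁₁} e₁A) ⊕ e₂A) is isomorphic to the ring of 2×2 matrices with entries B₁₁ = End_{A₁₁}(P), B₁₂ = P ⊗_{A₁₁} A₁₂, B₂₁ = Hom_{A₁₁}(P, A₂₁), B₂₂ = A₂₂ (with the natural compositions as matrix multiplication). -/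
universe w w'

open MulOpposite

variable {A : Type*} [Ring A]

/-- An idempotent of a ring. -/
structure Idem (A : Type*) [Ring A] where
  e : A
  idem : e * e = e

/-- The additive subgroup `eAf = {x | e·x = x, x·f = x}` of a ring `A`. -/
def cornerSet₂ (e f : A) : AddSubgroup A where
  carrier := {x | e * x = x ∧ x * f = x}
  add_mem' := by
    rintro x y ⟨hx1, hx2⟩ ⟨hy1, hy2⟩
    exact ⟨by rw [mul_add, hx1, hy1], by rw [add_mul, hx2, hy2]⟩
  zero_mem' := ⟨mul_zero e, zero_mul f⟩
  neg_mem' := by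
    rintro x ⟨h1, h2⟩
    exact ⟨by rw [mul_neg, h1], by rw [neg_mul, h2]⟩

/-- Multiplication `eAf × fAg → eAg`. -/
def cmul {e f g : A} (x : ↥(cornerSet₂ e f)) (y : ↥(cornerSet₂ f g)) :
    ↥(cornerSet₂ e g) :=
  ⟨x.1 * y.1, ⟨by rw [← mul_assoc, x.2.1], by rw [mul_assoc, y.2.2]⟩⟩

/-- The corner ring `eAe` of an idempotent `e`, a unital ring with unit `e`. -/
def Corner (E : Idem A) : Type _ := ↥(cornerSet₂ E.e E.e)

instance (E : Idem A) : AddCommGroup (Corner E) :=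
  inferInstanceAs (AddCommGroup ↥(cornerSet₂ E.e E.e))

instance (E : Idem A) : Ring (Corner E) :=
  { (inferInstance : AddCommGroup ↥(cornerSet₂ E.e E.e)) with
    mul := fun x y => cmul x y
    mul_assoc := fun a b c => Subtype.ext (mul_assoc a.1 b.1 c.1)
    one := ⟨E.e, E.idem, E.idem⟩
    one_mul := fun a => Subtype.ext a.2.1
    mul_one := fun a => Subtype.ext a.2.2
    left_distrib := fun a b c => Subtype.ext (mul_add a.1 b.1 c.1)
    right_distrib := fun a b c => Subtype.ext (add_mul a.1 b.1 c.1)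
    zero_mul := fun a => Subtype.ext (zero_mul a.1)
    mul_zero := fun a => Subtype.ext (mul_zero a.1) }

/-- The right ideal `eA`, as a right `A`-submodule of `A`. -/
def rightIdealOf (e : A) : Submodule Aᵐᵒᵖ A where
  carrier := {x | e * x = x}
  add_mem' := by
    intro x y hx hy
    show e * (x + y) = x + y
    rw [mul_add, hx, hy]
  zero_mem' := mul_zero e
  smul_mem' := by
    intro a x hx
    show e * (x * a.unop) = x * a.unop
    rw [← mul_assoc, hx]

/-- The left action of the corner ring `e₁Ae₁` on the right ideal `e₁A`. -/
instance cornerSMul (E : Idem A) : SMul (Corner E) ↥(rightIdealOf E.e) :=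
  ⟨fun c x => ⟨c.1 * x.1, show _ * (c.1 * x.1) = c.1 * x.1 by rw [← mul_assoc, c.2.1]⟩⟩

instance cornerModule (E : Idem A) : Module (Corner E) ↥(rightIdealOf E.e) where
  one_smul x := Subtype.ext x.2
  mul_smul c d x := Subtype.ext (mul_assoc c.1 d.1 x.1)
  smul_zero c := Subtype.ext (mul_zero c.1)
  smul_add c x y := Subtype.ext (mul_add c.1 x.1 y.1)
  add_smul c d x := Subtype.ext (add_mul c.1 d.1 x.1)
  zero_smul x := Subtype.ext (zero_mul x.1)

/-- The right action of the corner ring `fAf` on `eAf`. -/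
instance cornerSMul₂ (e : A) (F : Idem A) : SMul (Corner F)ᵐᵒᵖ ↥(cornerSet₂ e F.e) :=
  ⟨fun c x => cmul x c.unop⟩

instance cornerModule₂ (e : A) (F : Idem A) :
    Module (Corner F)ᵐᵒᵖ ↥(cornerSet₂ e F.e) where
  one_smul x := Subtype.ext x.2.2
  mul_smul c d x := Subtype.ext (mul_assoc x.1 d.unop.1 c.unop.1).symm
  smul_zero c := Subtype.ext (zero_mul c.unop.1)
  smul_add c x y := Subtype.ext (add_mul x.1 y.1 c.unop.1)
  add_smul c d x := Subtype.ext (mul_add x.1 c.unop.1 d.unop.1)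
  zero_smul x := Subtype.ext (mul_zero x.1)

/-!
An endomorphism of `(P ⊗ e₁A) ⊕ e₂A` is a `2 × 2` matrix of `A`-linear maps between the summands.
Evaluating at the generators `p ⊗ e₁` and `e₂` identifies the four blocks, by the hom–tensor
adjunction and `Hom_A(eA, M) = Me`, with `End(P ⊗ e₁Ae₁) = End(P)`, `(P ⊗ e₁A)e₂ = P ⊗ A₁₂`,
`Hom(P, e₂Ae₁)` and `e₂Ae₂`; composition of blocks becomes the natural pairings.

The tensor products are given only through universal properties for targets in a single
universe. Comparing them with the quotient of `P ⊗_ℤ N` by the balancing relations, using that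
characters into `ℚ/ℤ` separate points, makes them available for targets in every universe.
-/

section BalancedTensorProduct

open TensorProduct

variable (R : Type*) [Ring R] {P N X : Type*} [AddCommGroup P] [Module Rᵐᵒᵖ P]
  [AddCommGroup N] [Module R N] [AddCommGroup X]

structure IsBalanced (b : P → N → X) : Prop where
  add_left : ∀ p p' n, b (p + p') n = b p n + b p' n
  add_right : ∀ p n n', b p (n + n') = b p n + b p n'
  op_smul_left : ∀ (p : P) (c : R) (n : N), b (op c • p) n = b p (c • n)

variable {R} in
def IsBalanced.toAddMonoidHom₂ {b : P → N → X} (hb : IsBalanced R b) : P →+ N →+ X :=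
  AddMonoidHom.mk' (fun p => AddMonoidHom.mk' (b p) (hb.add_right p))
    fun p p' => AddMonoidHom.ext (hb.add_left p p')

variable (P N)

def balancedRel : AddSubgroup (P ⊗[ℤ] N) :=
  AddSubgroup.closure {z | ∃ (p : P) (c : R) (n : N), z = (op c • p) ⊗ₜ n - p ⊗ₜ (c • n)}

/-- The balanced tensor product `P ⊗_R N` of a right and a left `R`-module. -/
abbrev BalancedTensor : Type _ := P ⊗[ℤ] N ⧸ balancedRel R P N

namespace BalancedTensor

variable {R P N}

def tmul (p : P) (n : N) : BalancedTensor R P N := QuotientAddGroup.mk (p ⊗ₜ n)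

variable (R) in
theorem isBalanced_tmul : IsBalanced R (tmul : P → N → BalancedTensor R P N) where
  add_left p p' n := congrArg QuotientAddGroup.mk (add_tmul p p' n)
  add_right p n n' := congrArg QuotientAddGroup.mk (tmul_add p n n')
  op_smul_left p c n := QuotientAddGroup.eq_iff_sub_mem.2 <|
    AddSubgroup.subset_closure ⟨p, c, n, rfl⟩

def lift {b : P → N → X} (hb : IsBalanced R b) : BalancedTensor R P N →+ X :=
  QuotientAddGroup.lift _ (liftAddHom hb.toAddMonoidHom₂ fun z p n => by
      simp only [IsBalanced.toAddMonoidHom₂, AddMonoidHom.mk'_apply, map_zsmul,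
        AddMonoidHom.zsmul_apply])
    ((AddSubgroup.closure_le _).2 <| by
      rintro _ ⟨p, c, n, rfl⟩
      simp [IsBalanced.toAddMonoidHom₂, hb.op_smul_left])

@[simp]
theorem lift_tmul {b : P → N → X} (hb : IsBalanced R b) (p : P) (n : N) :
    lift hb (tmul p n) = b p n :=
  (QuotientAddGroup.lift_mk _ _ _).trans (liftAddHom_tmul _ _ p n)

theorem addMonoidHom_ext {f g : BalancedTensor R P N →+ X}
    (h : ∀ p n, f (tmul p n) = g (tmul p n)) : f = g :=
  QuotientAddGroup.addMonoidHom_ext _ <| AddMonoidHom.toIntLinearMap_injective <|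
    TensorProduct.ext' h

end BalancedTensor

end BalancedTensorProduct

theorem AddCommGroup.exists_addMonoidHom_ulift_addCircle_ne_zero.{u} {G : Type*}
    [AddCommGroup G] {x : G} (hx : x ≠ 0) :
    ∃ χ : G →+ ULift.{u} (AddCircle (1 : ℚ)), χ x ≠ 0 := by
  obtain ⟨χ, hχ⟩ := CharacterModule.exists_character_apply_ne_zero_of_ne_zero hx
  exact ⟨(AddEquiv.ulift.symm : AddCircle (1 : ℚ) ≃+ ULift.{u} _).toAddMonoidHom.comp χ,
    fun h => hχ (congrArg ULift.down h :)⟩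

section UniversalProperty

open BalancedTensor

variable {R : Type*} [Ring R] {P N T X : Type*} [AddCommGroup P] [Module Rᵐᵒᵖ P]
  [AddCommGroup N] [Module R N] [AddCommGroup T] [AddCommGroup X]

theorem IsBalanced.addMonoidHom_comp {Y : Type*} [AddCommGroup Y] {b : P → N → X}
    (hb : IsBalanced R b) (f : X →+ Y) : IsBalanced R fun p n => f (b p n) where
  add_left p p' n := by rw [hb.add_left, map_add]
  add_right p n n' := by rw [hb.add_right, map_add]
  op_smul_left p c n := by rw [hb.op_smul_left]

theorem IsBalanced.zero_left {b : P → N → X} (hb : IsBalanced R b) (n : N) : b 0 n = 0 := by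
  simpa using hb.add_left 0 0 n

variable (R) in
/-- `t` exhibits `T` as the balanced tensor product `P ⊗_R N`. -/
structure IsBalancedTensor (t : P → N → T) : Prop where
  isBalanced : IsBalanced R t
  bijective_lift : Function.Bijective (BalancedTensor.lift isBalanced)

theorem IsBalanced.isBalancedTensor {t : P → N → T} (ht : IsBalanced R t)
    (huniv : ∀ (Y : Type w) [AddCommGroup Y] (b : P → N → Y), IsBalanced R b →
      ∃! g : T →+ Y, ∀ p n, g (t p n) = b p n) :
    IsBalancedTensor R t := by
  refine ⟨ht, (injective_iff_map_eq_zero _).2 fun z hz => ?_, fun u => ?_⟩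
  · by_contra hz0
    obtain ⟨χ, hχ⟩ := AddCommGroup.exists_addMonoidHom_ulift_addCircle_ne_zero.{w} hz0
    obtain ⟨g, hg, -⟩ := huniv _ _ ((isBalanced_tmul R).addMonoidHom_comp χ)
    have hgχ : g.comp (BalancedTensor.lift ht) = χ := addMonoidHom_ext fun p n => by simp [hg]
    exact hχ (by rw [← hgχ, AddMonoidHom.comp_apply, hz, map_zero])
  · by_contra hu
    have hu0 : (QuotientAddGroup.mk u : T ⧸ (BalancedTensor.lift ht).range) ≠ 0 := by
      rwa [Ne, QuotientAddGroup.eq_zero_iff, AddMonoidHom.mem_range]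
    obtain ⟨χ, hχ⟩ := AddCommGroup.exists_addMonoidHom_ulift_addCircle_ne_zero.{w} hu0
    have hzero : IsBalanced R fun (_ : P) (_ : N) => (0 : ULift.{w} (AddCircle (1 : ℚ))) :=
      ⟨by simp, by simp, by simp⟩
    have hχ0 : χ.comp (QuotientAddGroup.mk' _) = 0 := (huniv _ _ hzero).unique
      (fun p n => by
        rw [AddMonoidHom.comp_apply, QuotientAddGroup.mk'_apply,
          (QuotientAddGroup.eq_zero_iff _).2
            (AddMonoidHom.mem_range.2 ⟨tmul p n, lift_tmul ht p n⟩), map_zero])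
      (fun p n => rfl)
    exact hχ (DFunLike.congr_fun hχ0 u)

namespace IsBalancedTensor

variable {t : P → N → T}

noncomputable def equiv (h : IsBalancedTensor R t) : BalancedTensor R P N ≃+ T :=
  AddEquiv.ofBijective _ h.bijective_lift

theorem induction_on (h : IsBalancedTensor R t) {motive : T → Prop} (u : T) (zero : motive 0)
    (tmul : ∀ p n, motive (t p n)) (add : ∀ u v, motive u → motive v → motive (u + v)) :
    motive u := by
  obtain ⟨z, rfl⟩ := h.bijective_lift.2 u
  induction z using QuotientAddGroup.induction_on with | H z => ?_
  induction z using TensorProduct.induction_on with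
  | zero => rwa [QuotientAddGroup.mk_zero, map_zero]
  | tmul p n => exact (lift_tmul h.isBalanced p n).symm ▸ tmul p n
  | add x y hx hy => rw [QuotientAddGroup.mk_add, map_add]; exact add _ _ hx hy

noncomputable def lift (h : IsBalancedTensor R t) {b : P → N → X} (hb : IsBalanced R b) :
    T →+ X :=
  (BalancedTensor.lift hb).comp h.equiv.symm.toAddMonoidHom

@[simp]
theorem lift_apply (h : IsBalancedTensor R t) {b : P → N → X} (hb : IsBalanced R b)
    (p : P) (n : N) : h.lift hb (t p n) = b p n := by
  rw [lift, AddMonoidHom.comp_apply, AddEquiv.coe_toAddMonoidHom,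
    (h.equiv.symm_apply_eq (y := tmul p n)).2 (lift_tmul h.isBalanced p n).symm, lift_tmul]

noncomputable def liftLinear {S : Type*} [Semiring S] [Module S N] [Module S T] [Module S X]
    (h : IsBalancedTensor R t) (ht_smul : ∀ p (s : S) n, t p (s • n) = s • t p n)
    {b : P → N → X} (hb : IsBalanced R b) (hb_smul : ∀ p (s : S) n, b p (s • n) = s • b p n) :
    T →ₗ[S] X where
  toFun := h.lift hb
  map_add' := map_add _
  map_smul' s u := by
    induction u using h.induction_on with
    | zero => simp
    | tmul p n => rw [← ht_smul, lift_apply, lift_apply, hb_smul, RingHom.id_apply]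
    | add u v hu hv => rw [smul_add, map_add, map_add, hu, hv, smul_add]

@[simp]
theorem liftLinear_apply {S : Type*} [Semiring S] [Module S N] [Module S T] [Module S X]
    (h : IsBalancedTensor R t) (ht_smul : ∀ p (s : S) n, t p (s • n) = s • t p n)
    {b : P → N → X} (hb : IsBalanced R b) (hb_smul : ∀ p (s : S) n, b p (s • n) = s • b p n)
    (p : P) (n : N) : h.liftLinear ht_smul hb hb_smul (t p n) = b p n :=
  h.lift_apply hb p n

end IsBalancedTensor

end UniversalProperty

section Corners

def Idem.toRightIdeal (E : Idem A) : ↥(rightIdealOf E.e) := ⟨E.e, E.idem⟩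

theorem op_val_smul_toRightIdeal {E : Idem A} (x : ↥(rightIdealOf E.e)) :
    op x.1 • E.toRightIdeal = x :=
  Subtype.ext x.2

instance cornerLeftSMul (E : Idem A) (f : A) : SMul (Corner E) ↥(cornerSet₂ E.e f) :=
  ⟨fun c x => cmul c x⟩

instance cornerLeftModule (E : Idem A) (f : A) : Module (Corner E) ↥(cornerSet₂ E.e f) where
  one_smul x := Subtype.ext x.2.1
  mul_smul c d x := Subtype.ext (mul_assoc c.1 d.1 x.1)
  smul_zero c := Subtype.ext (mul_zero c.1)
  smul_add c x y := Subtype.ext (mul_add c.1 x.1 y.1)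
  add_smul c d x := Subtype.ext (add_mul c.1 d.1 x.1)
  zero_smul x := Subtype.ext (zero_mul x.1)

theorem smul_toRightIdeal {E : Idem A} (c : Corner E) :
    c • E.toRightIdeal = op c.1 • E.toRightIdeal :=
  Subtype.ext (c.2.2.trans c.2.1.symm)

def cornerSetProj (E F : Idem A) : ↥(rightIdealOf E.e) →+ ↥(cornerSet₂ E.e F.e) where
  toFun x := ⟨x.1 * F.e, by rw [← mul_assoc, x.2], by rw [mul_assoc, F.idem]⟩
  map_zero' := Subtype.ext (zero_mul F.e)
  map_add' x y := Subtype.ext (add_mul x.1 y.1 F.e)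

theorem cornerSetProj_smul (E F : Idem A) (c : Corner E) (x : ↥(rightIdealOf E.e)) :
    cornerSetProj E F (c • x) = c • cornerSetProj E F x :=
  Subtype.ext (mul_assoc c.1 x.1 F.e)

def cornerProj (E : Idem A) : ↥(rightIdealOf E.e) →+ Corner E :=
  cornerSetProj E E

theorem cornerProj_smul (E : Idem A) (c : Corner E) (x : ↥(rightIdealOf E.e)) :
    cornerProj E (c • x) = c * cornerProj E x :=
  cornerSetProj_smul E E c x

theorem cornerProj_toRightIdeal (E : Idem A) : cornerProj E E.toRightIdeal = 1 :=
  Subtype.ext E.idem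

theorem cornerProj_op_smul (E : Idem A) (c : Corner E) (x : ↥(rightIdealOf E.e)) :
    cornerProj E (op c.1 • x) = cornerProj E x * c := by
  refine Subtype.ext ?_
  change x.1 * c.1 * E.e = x.1 * E.e * c.1
  rw [mul_assoc, c.2.2, mul_assoc, c.2.1]

def cornerLeftMul {e f : A} (z : ↥(cornerSet₂ e f)) :
    ↥(rightIdealOf f) →ₗ[Aᵐᵒᵖ] ↥(rightIdealOf e) where
  toFun x := ⟨z.1 * x.1, show e * (z.1 * x.1) = z.1 * x.1 by rw [← mul_assoc, z.2.1]⟩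
  map_add' x y := Subtype.ext (mul_add z.1 x.1 y.1)
  map_smul' a x := Subtype.ext (mul_assoc z.1 x.1 a.unop).symm

theorem cornerLeftMul_toRightIdeal {e : A} {F : Idem A} (z : ↥(cornerSet₂ e F.e)) :
    cornerLeftMul z F.toRightIdeal = ⟨z.1, z.2.1⟩ :=
  Subtype.ext z.2.2

def cmulLeft {e f : A} (z : ↥(cornerSet₂ e f)) (G : Idem A) :
    ↥(cornerSet₂ f G.e) →ₗ[(Corner G)ᵐᵒᵖ] ↥(cornerSet₂ e G.e) where
  toFun := cmul z
  map_add' x y := Subtype.ext (mul_add z.1 x.1 y.1)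
  map_smul' c x := Subtype.ext (mul_assoc z.1 x.1 c.unop.1).symm

def rightIdealSMul {M : Type*} [AddCommGroup M] [Module Aᵐᵒᵖ M] (e : A) (m : M) :
    ↥(rightIdealOf e) →ₗ[Aᵐᵒᵖ] M where
  toFun x := op x.1 • m
  map_add' x y := by rw [Submodule.coe_add, op_add, add_smul]
  map_smul' a x := by
    change op (x.1 * a.unop) • m = a • op x.1 • m
    rw [op_mul, op_unop, mul_smul]

theorem mem_cornerSet₂_of_op_smul_eq {e : A} (F : Idem A) {x : ↥(rightIdealOf e)}
    (hx : op F.e • x = x) : x.1 ∈ cornerSet₂ e F.e :=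
  ⟨x.2, congrArg Subtype.val hx⟩

end Corners

theorem tmul_eq_op_smul {E : Idem A} {P T : Type*} [AddCommGroup T] [Module Aᵐᵒᵖ T]
    {t : P → ↥(rightIdealOf E.e) → T} (ht_smul : ∀ p (a : Aᵐᵒᵖ) x, t p (a • x) = a • t p x)
    (p : P) (x : ↥(rightIdealOf E.e)) : t p x = op x.1 • t p E.toRightIdeal := by
  rw [← ht_smul, op_val_smul_toRightIdeal]

theorem op_smul_tmul_toRightIdeal {E : Idem A} {P T : Type*} [AddCommGroup T]
    [Module Aᵐᵒᵖ T] {t : P → ↥(rightIdealOf E.e) → T}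
    (ht_smul : ∀ p (a : Aᵐᵒᵖ) x, t p (a • x) = a • t p x) (p : P) :
    op E.e • t p E.toRightIdeal = t p E.toRightIdeal :=
  (tmul_eq_op_smul ht_smul p E.toRightIdeal).symm

section TensorMaps

variable {E₁ E₂ : Idem A} {P : Type*} [AddCommGroup P] [Module (Corner E₁)ᵐᵒᵖ P]
  {T : Type*} [AddCommGroup T] {t : P → ↥(rightIdealOf E₁.e) → T}
  {T₁₂ : Type*} [AddCommGroup T₁₂] {t₁₂ : P → ↥(cornerSet₂ E₁.e E₂.e) → T₁₂}

/-- `P ⊗ e₁A → P ⊗ e₁Ae₁ = P`. -/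
noncomputable def projP (hT : IsBalancedTensor (Corner E₁) t) : T →+ P :=
  hT.lift (b := fun p x => op (cornerProj E₁ x) • p)
    { add_left := fun p p' x => smul_add _ p p'
      add_right := fun p x x' => by rw [map_add, op_add, add_smul]
      op_smul_left := fun p c x => by rw [← mul_smul, ← op_mul, cornerProj_smul] }

theorem projP_tmul (hT : IsBalancedTensor (Corner E₁) t) (p : P) (x : ↥(rightIdealOf E₁.e)) :
    projP hT (t p x) = op (cornerProj E₁ x) • p :=
  hT.lift_apply _ p x

theorem projP_tmul_toRightIdeal (hT : IsBalancedTensor (Corner E₁) t) (p : P) :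
    projP hT (t p E₁.toRightIdeal) = p := by
  rw [projP_tmul, cornerProj_toRightIdeal, op_one, one_smul]

noncomputable def inclT₁₂ (hT₁₂ : IsBalancedTensor (Corner E₁) t₁₂)
    (ht : IsBalanced (Corner E₁) t) : T₁₂ →+ T :=
  hT₁₂.lift (b := fun p a => t p ⟨a.1, a.2.1⟩)
    { add_left := fun p p' a => ht.add_left p p' ⟨a.1, a.2.1⟩
      add_right := fun p a a' => ht.add_right p ⟨a.1, a.2.1⟩ ⟨a'.1, a'.2.1⟩
      op_smul_left := fun p c a => ht.op_smul_left p c ⟨a.1, a.2.1⟩ }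

theorem inclT₁₂_tmul (hT₁₂ : IsBalancedTensor (Corner E₁) t₁₂) (ht : IsBalanced (Corner E₁) t)
    (p : P) (a : ↥(cornerSet₂ E₁.e E₂.e)) : inclT₁₂ hT₁₂ ht (t₁₂ p a) = t p ⟨a.1, a.2.1⟩ :=
  hT₁₂.lift_apply (b := fun p a => t p ⟨a.1, a.2.1⟩) _ p a

noncomputable def projT₁₂ (hT : IsBalancedTensor (Corner E₁) t)
    (ht₁₂ : IsBalanced (Corner E₁) t₁₂) : T →+ T₁₂ :=
  hT.lift (b := fun p x => t₁₂ p (cornerSetProj E₁ E₂ x))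
    { add_left := fun p p' x => ht₁₂.add_left _ _ _
      add_right := fun p x x' => by rw [map_add, ht₁₂.add_right]
      op_smul_left := fun p c x => by rw [ht₁₂.op_smul_left, cornerSetProj_smul] }

theorem projT₁₂_tmul (hT : IsBalancedTensor (Corner E₁) t) (ht₁₂ : IsBalanced (Corner E₁) t₁₂)
    (p : P) (x : ↥(rightIdealOf E₁.e)) :
    projT₁₂ hT ht₁₂ (t p x) = t₁₂ p (cornerSetProj E₁ E₂ x) :=
  hT.lift_apply _ p x

theorem projT₁₂_inclT₁₂ (hT : IsBalancedTensor (Corner E₁) t)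
    (hT₁₂ : IsBalancedTensor (Corner E₁) t₁₂) (u : T₁₂) :
    projT₁₂ hT hT₁₂.isBalanced (inclT₁₂ hT₁₂ hT.isBalanced u) = u := by
  induction u using hT₁₂.induction_on with
  | zero => simp
  | tmul p a => rw [inclT₁₂_tmul, projT₁₂_tmul]; exact congrArg (t₁₂ p) (Subtype.ext a.2.2)
  | add u v hu hv => rw [map_add, map_add, hu, hv]

variable [Module Aᵐᵒᵖ T]

theorem IsBalanced.tmul_op_smul_toRightIdeal (ht : IsBalanced (Corner E₁) t)
    (ht_smul : ∀ p (a : Aᵐᵒᵖ) x, t p (a • x) = a • t p x) (c : Corner E₁) (p : P) :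
    t (op c • p) E₁.toRightIdeal = op c.1 • t p E₁.toRightIdeal := by
  rw [ht.op_smul_left, smul_toRightIdeal, ht_smul]

theorem projP_op_smul (hT : IsBalancedTensor (Corner E₁) t)
    (ht_smul : ∀ p (a : Aᵐᵒᵖ) x, t p (a • x) = a • t p x) (c : Corner E₁) (u : T) :
    projP hT (op c.1 • u) = op c • projP hT u := by
  induction u using hT.induction_on with
  | zero => simp
  | tmul p x => rw [← ht_smul, projP_tmul, projP_tmul, cornerProj_op_smul, op_mul, mul_smul]
  | add u v hu hv => rw [smul_add, map_add, map_add, hu, hv, smul_add]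

theorem tmul_projP (hT : IsBalancedTensor (Corner E₁) t)
    (ht_smul : ∀ p (a : Aᵐᵒᵖ) x, t p (a • x) = a • t p x) (u : T) :
    t (projP hT u) E₁.toRightIdeal = op E₁.e • u := by
  induction u using hT.induction_on with
  | zero =>
    rw [map_zero, smul_zero, hT.isBalanced.zero_left]
  | tmul p x =>
    rw [projP_tmul, hT.isBalanced.tmul_op_smul_toRightIdeal ht_smul, ← ht_smul, ← ht_smul]
    congr 1
    refine Subtype.ext ?_
    change E₁.e * (x.1 * E₁.e) = x.1 * E₁.e
    rw [← mul_assoc, x.2]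
  | add u v hu hv => rw [map_add, hT.isBalanced.add_left, hu, hv, smul_add]

theorem inclT₁₂_projT₁₂ (hT : IsBalancedTensor (Corner E₁) t)
    (hT₁₂ : IsBalancedTensor (Corner E₁) t₁₂)
    (ht_smul : ∀ p (a : Aᵐᵒᵖ) x, t p (a • x) = a • t p x) (u : T) :
    inclT₁₂ hT₁₂ hT.isBalanced (projT₁₂ hT hT₁₂.isBalanced u) = op E₂.e • u := by
  induction u using hT.induction_on with
  | zero => simp
  | tmul p x => rw [projT₁₂_tmul, inclT₁₂_tmul, ← ht_smul]; rfl
  | add u v hu hv => rw [map_add, map_add, hu, hv, smul_add]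

theorem op_smul_inclT₁₂ (hT : IsBalancedTensor (Corner E₁) t)
    (hT₁₂ : IsBalancedTensor (Corner E₁) t₁₂)
    (ht_smul : ∀ p (a : Aᵐᵒᵖ) x, t p (a • x) = a • t p x) (u : T₁₂) :
    op E₂.e • inclT₁₂ hT₁₂ hT.isBalanced u = inclT₁₂ hT₁₂ hT.isBalanced u := by
  rw [← inclT₁₂_projT₁₂ hT hT₁₂ ht_smul, projT₁₂_inclT₁₂]

noncomputable def tensorMap (hT : IsBalancedTensor (Corner E₁) t)
    (ht_smul : ∀ p (a : Aᵐᵒᵖ) x, t p (a • x) = a • t p x) (g : Module.End (Corner E₁)ᵐᵒᵖ P) :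
    T →ₗ[Aᵐᵒᵖ] T :=
  hT.liftLinear ht_smul (b := fun p x => t (g p) x)
    { add_left := fun p p' x => by rw [map_add, hT.isBalanced.add_left]
      add_right := fun p x x' => hT.isBalanced.add_right _ _ _
      op_smul_left := fun p c x => by rw [map_smul, hT.isBalanced.op_smul_left] }
    fun p a x => ht_smul (g p) a x

theorem tensorMap_tmul (hT : IsBalancedTensor (Corner E₁) t)
    (ht_smul : ∀ p (a : Aᵐᵒᵖ) x, t p (a • x) = a • t p x) (g : Module.End (Corner E₁)ᵐᵒᵖ P)
    (p : P) (x : ↥(rightIdealOf E₁.e)) : tensorMap hT ht_smul g (t p x) = t (g p) x :=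
  hT.liftLinear_apply _ _ _ p x

noncomputable def tensorEval {e : A} (hT : IsBalancedTensor (Corner E₁) t)
    (ht_smul : ∀ p (a : Aᵐᵒᵖ) x, t p (a • x) = a • t p x)
    (h : P →ₗ[(Corner E₁)ᵐᵒᵖ] ↥(cornerSet₂ e E₁.e)) : T →ₗ[Aᵐᵒᵖ] ↥(rightIdealOf e) :=
  hT.liftLinear ht_smul (b := fun p x => cornerLeftMul (h p) x)
    { add_left := fun p p' x => by rw [map_add]; exact Subtype.ext (add_mul _ _ _)
      add_right := fun p x x' => map_add _ _ _
      op_smul_left := fun p c x => by rw [map_smul]; exact Subtype.ext (mul_assoc _ _ _) }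
    fun p a x => map_smul _ a x

theorem tensorEval_tmul {e : A} (hT : IsBalancedTensor (Corner E₁) t)
    (ht_smul : ∀ p (a : Aᵐᵒᵖ) x, t p (a • x) = a • t p x)
    (h : P →ₗ[(Corner E₁)ᵐᵒᵖ] ↥(cornerSet₂ e E₁.e)) (p : P) (x : ↥(rightIdealOf E₁.e)) :
    tensorEval hT ht_smul h (t p x) = cornerLeftMul (h p) x :=
  hT.liftLinear_apply _ _ _ p x

theorem linearMap_prod_ext_of_generators (hT : IsBalancedTensor (Corner E₁) t)
    (ht_smul : ∀ p (a : Aᵐᵒᵖ) x, t p (a • x) = a • t p x) {M : Type*} [AddCommGroup M]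
    [Module Aᵐᵒᵖ M] {f g : T × ↥(rightIdealOf E₂.e) →ₗ[Aᵐᵒᵖ] M}
    (h₁ : ∀ p, f (t p E₁.toRightIdeal, 0) = g (t p E₁.toRightIdeal, 0))
    (h₂ : f (0, E₂.toRightIdeal) = g (0, E₂.toRightIdeal)) : f = g := by
  refine LinearMap.prod_ext (LinearMap.ext fun u => ?_) (LinearMap.ext fun x => ?_)
  · induction u using hT.induction_on with
    | zero => simp only [map_zero]
    | tmul p x =>
      have hx : ((t p x, 0) : T × ↥(rightIdealOf E₂.e)) = op x.1 • (t p E₁.toRightIdeal, 0) := by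
        rw [Prod.smul_mk, smul_zero, ← tmul_eq_op_smul ht_smul]
      simp only [LinearMap.comp_apply, LinearMap.inl_apply, hx, map_smul, h₁]
    | add u v hu hv => simp only [LinearMap.comp_apply, map_add] at hu hv ⊢; rw [hu, hv]
  · have hx : ((0, x) : T × ↥(rightIdealOf E₂.e)) = op x.1 • (0, E₂.toRightIdeal) := by
      rw [Prod.smul_mk, smul_zero, op_val_smul_toRightIdeal]
    simp only [LinearMap.comp_apply, LinearMap.inr_apply, hx, map_smul, h₂]

end TensorMaps

section MatrixForm

variable {E₁ E₂ : Idem A} {P : Type*} [AddCommGroup P] [Module (Corner E₁)ᵐᵒᵖ P]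
  {T : Type*} [AddCommGroup T] [Module Aᵐᵒᵖ T] {t : P → ↥(rightIdealOf E₁.e) → T}
  {T₁₂ : Type*} [AddCommGroup T₁₂] {t₁₂ : P → ↥(cornerSet₂ E₁.e E₂.e) → T₁₂}
  (hT : IsBalancedTensor (Corner E₁) t) (hT₁₂ : IsBalancedTensor (Corner E₁) t₁₂)
  (ht_smul : ∀ p (a : Aᵐᵒᵖ) x, t p (a • x) = a • t p x)

noncomputable def endOfLinearMap (f : T →ₗ[Aᵐᵒᵖ] T) : Module.End (Corner E₁)ᵐᵒᵖ P where
  toFun p := projP hT (f (t p E₁.toRightIdeal))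
  map_add' p p' := by rw [hT.isBalanced.add_left, map_add, map_add]
  map_smul' c p := by
    rw [← op_unop c, hT.isBalanced.tmul_op_smul_toRightIdeal ht_smul, map_smul,
      projP_op_smul hT ht_smul, RingHom.id_apply]

noncomputable def homOfLinearMap (f : T →ₗ[Aᵐᵒᵖ] ↥(rightIdealOf E₂.e)) :
    P →ₗ[(Corner E₁)ᵐᵒᵖ] ↥(cornerSet₂ E₂.e E₁.e) where
  toFun p := ⟨f (t p E₁.toRightIdeal), mem_cornerSet₂_of_op_smul_eq E₁ <| by
    rw [← map_smul, op_smul_tmul_toRightIdeal ht_smul]⟩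
  map_add' p p' := by simp only [hT.isBalanced.add_left, map_add]; rfl
  map_smul' c p := by
    refine Subtype.ext ?_
    rw [← op_unop c]
    simp only [hT.isBalanced.tmul_op_smul_toRightIdeal ht_smul, map_smul]
    rfl

@[simp]
theorem endOfLinearMap_apply (f : T →ₗ[Aᵐᵒᵖ] T) (p : P) :
    endOfLinearMap hT ht_smul f p = projP hT (f (t p E₁.toRightIdeal)) :=
  rfl

@[simp]
theorem homOfLinearMap_apply_val (f : T →ₗ[Aᵐᵒᵖ] ↥(rightIdealOf E₂.e)) (p : P) :
    (homOfLinearMap hT ht_smul f p).1 = (f (t p E₁.toRightIdeal)).1 :=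
  rfl

theorem op_smul_inr_toRightIdeal (E : Idem A) :
    op E.e • ((0, E.toRightIdeal) : T × ↥(rightIdealOf E.e)) = (0, E.toRightIdeal) :=
  Prod.ext (smul_zero _) (op_val_smul_toRightIdeal E.toRightIdeal)

/-- The matrix of `φ`: its four blocks, read through `End_A(P ⊗ e₁A) ≅ End(P)`,
`Hom_A(e₂A, P ⊗ e₁A) ≅ (P ⊗ e₁A) e₂ ≅ P ⊗ A₁₂`, `Hom_A(P ⊗ e₁A, e₂A) ≅ Hom(P, A₂₁)` and
`End_A(e₂A) ≅ A₂₂`. -/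
noncomputable def toMatrix (φ : Module.End Aᵐᵒᵖ (T × ↥(rightIdealOf E₂.e))) :
    Module.End (Corner E₁)ᵐᵒᵖ P × T₁₂ × (P →ₗ[(Corner E₁)ᵐᵒᵖ] ↥(cornerSet₂ E₂.e E₁.e)) ×
      Corner E₂ :=
  (endOfLinearMap hT ht_smul (LinearMap.fst _ _ _ ∘ₗ φ ∘ₗ LinearMap.inl _ _ _),
    projT₁₂ hT hT₁₂.isBalanced (φ (0, E₂.toRightIdeal)).1,
    homOfLinearMap hT ht_smul (LinearMap.snd _ _ _ ∘ₗ φ ∘ₗ LinearMap.inl _ _ _),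
    ⟨(φ (0, E₂.toRightIdeal)).2.1, mem_cornerSet₂_of_op_smul_eq E₂ <| by
      rw [← Prod.smul_snd, ← map_smul, op_smul_inr_toRightIdeal]⟩)

noncomputable def ofMatrix
    (b : Module.End (Corner E₁)ᵐᵒᵖ P × T₁₂ × (P →ₗ[(Corner E₁)ᵐᵒᵖ] ↥(cornerSet₂ E₂.e E₁.e)) ×
      Corner E₂) :
    Module.End Aᵐᵒᵖ (T × ↥(rightIdealOf E₂.e)) :=
  ((tensorMap hT ht_smul b.1).coprod
      (rightIdealSMul E₂.e (inclT₁₂ hT₁₂ hT.isBalanced b.2.1))).prod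
    ((tensorEval hT ht_smul b.2.2.1).coprod (cornerLeftMul b.2.2.2))

theorem ofMatrix_apply
    (b : Module.End (Corner E₁)ᵐᵒᵖ P × T₁₂ × (P →ₗ[(Corner E₁)ᵐᵒᵖ] ↥(cornerSet₂ E₂.e E₁.e)) ×
      Corner E₂) (v : T) (x : ↥(rightIdealOf E₂.e)) :
    ofMatrix hT hT₁₂ ht_smul b (v, x) =
      (tensorMap hT ht_smul b.1 v + op x.1 • inclT₁₂ hT₁₂ hT.isBalanced b.2.1,
        tensorEval hT ht_smul b.2.2.1 v + cornerLeftMul b.2.2.2 x) :=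
  rfl

theorem ofMatrix_apply_inl
    (b : Module.End (Corner E₁)ᵐᵒᵖ P × T₁₂ × (P →ₗ[(Corner E₁)ᵐᵒᵖ] ↥(cornerSet₂ E₂.e E₁.e)) ×
      Corner E₂) (p : P) :
    ofMatrix hT hT₁₂ ht_smul b (t p E₁.toRightIdeal, 0) =
      (t (b.1 p) E₁.toRightIdeal, ⟨(b.2.2.1 p).1, (b.2.2.1 p).2.1⟩) := by
  rw [ofMatrix_apply, tensorMap_tmul, tensorEval_tmul, cornerLeftMul_toRightIdeal, map_zero,
    ZeroMemClass.coe_zero, op_zero, zero_smul, add_zero, add_zero]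

theorem ofMatrix_apply_inr
    (b : Module.End (Corner E₁)ᵐᵒᵖ P × T₁₂ × (P →ₗ[(Corner E₁)ᵐᵒᵖ] ↥(cornerSet₂ E₂.e E₁.e)) ×
      Corner E₂) :
    ofMatrix hT hT₁₂ ht_smul b (0, E₂.toRightIdeal) =
      (inclT₁₂ hT₁₂ hT.isBalanced b.2.1, ⟨b.2.2.2.1, b.2.2.2.2.1⟩) := by
  rw [ofMatrix_apply, map_zero, map_zero, zero_add, zero_add]
  exact Prod.ext (op_smul_inclT₁₂ hT hT₁₂ ht_smul _) (Subtype.ext b.2.2.2.2.2)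

theorem toMatrix_ofMatrix
    (b : Module.End (Corner E₁)ᵐᵒᵖ P × T₁₂ × (P →ₗ[(Corner E₁)ᵐᵒᵖ] ↥(cornerSet₂ E₂.e E₁.e)) ×
      Corner E₂) :
    toMatrix hT hT₁₂ ht_smul (ofMatrix hT hT₁₂ ht_smul b) = b := by
  refine Prod.ext (LinearMap.ext fun p => ?_) <|
    Prod.ext ?_ <| Prod.ext (LinearMap.ext fun p => ?_) ?_
  · simp [toMatrix, ofMatrix_apply_inl, projP_tmul_toRightIdeal]
  · simp [toMatrix, ofMatrix_apply_inr, projT₁₂_inclT₁₂]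
  · exact Subtype.ext (by simp [toMatrix, ofMatrix_apply_inl])
  · exact Subtype.ext (by simp [toMatrix, ofMatrix_apply_inr])

theorem ofMatrix_toMatrix (φ : Module.End Aᵐᵒᵖ (T × ↥(rightIdealOf E₂.e))) :
    ofMatrix hT hT₁₂ ht_smul (toMatrix hT hT₁₂ ht_smul φ) = φ := by
  refine linearMap_prod_ext_of_generators hT ht_smul (fun p => ?_) ?_
  · have hφ : φ (t p E₁.toRightIdeal, 0) = op E₁.e • φ (t p E₁.toRightIdeal, 0) := by
      rw [← map_smul, Prod.smul_mk, smul_zero, op_smul_tmul_toRightIdeal ht_smul]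
    rw [ofMatrix_apply_inl]
    refine Prod.ext ?_ (Subtype.ext rfl)
    change t (projP hT (φ (t p E₁.toRightIdeal, 0)).1) E₁.toRightIdeal = _
    rw [tmul_projP hT ht_smul]
    exact congrArg Prod.fst hφ.symm
  · have hφ : φ (0, E₂.toRightIdeal) = op E₂.e • φ (0, E₂.toRightIdeal) := by
      rw [← map_smul, op_smul_inr_toRightIdeal]
    rw [ofMatrix_apply_inr]
    refine Prod.ext ?_ (Subtype.ext rfl)
    change inclT₁₂ hT₁₂ hT.isBalanced (projT₁₂ hT hT₁₂.isBalanced (φ (0, E₂.toRightIdeal)).1) = _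
    rw [inclT₁₂_projT₁₂ hT hT₁₂ ht_smul]
    exact congrArg Prod.fst hφ.symm

theorem toMatrix_add (φ ψ : Module.End Aᵐᵒᵖ (T × ↥(rightIdealOf E₂.e))) :
    toMatrix hT hT₁₂ ht_smul (φ + ψ) =
      toMatrix hT hT₁₂ ht_smul φ + toMatrix hT hT₁₂ ht_smul ψ := by
  refine Prod.ext (LinearMap.ext fun p => ?_) <|
    Prod.ext ?_ <| Prod.ext (LinearMap.ext fun p => ?_) ?_
  · simp [toMatrix]
  · simp [toMatrix]
  · exact Subtype.ext (by simp [toMatrix])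
  · rfl

noncomputable def mulEndT₁₂ (g : Module.End (Corner E₁)ᵐᵒᵖ P) : T₁₂ →+ T₁₂ :=
  (projT₁₂ hT hT₁₂.isBalanced).comp
    ((tensorMap hT ht_smul g).toAddMonoidHom.comp (inclT₁₂ hT₁₂ hT.isBalanced))

theorem mulEndT₁₂_tmul (g : Module.End (Corner E₁)ᵐᵒᵖ P) (p : P)
    (a : ↥(cornerSet₂ E₁.e E₂.e)) :
    mulEndT₁₂ hT hT₁₂ ht_smul g (t₁₂ p a) = t₁₂ (g p) a := by
  simp only [mulEndT₁₂, AddMonoidHom.comp_apply, inclT₁₂_tmul, LinearMap.toAddMonoidHom_coe,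
    tensorMap_tmul, projT₁₂_tmul]
  exact congrArg _ (Subtype.ext a.2.2)

noncomputable def mulT₁₂Corner (c : Corner E₂) : T₁₂ →+ T₁₂ :=
  (projT₁₂ hT hT₁₂.isBalanced).comp
    ((DistribSMul.toAddMonoidHom T (op c.1)).comp (inclT₁₂ hT₁₂ hT.isBalanced))

theorem mulT₁₂Corner_tmul (ht_smul : ∀ p (a : Aᵐᵒᵖ) x, t p (a • x) = a • t p x) (p : P)
    (a : ↥(cornerSet₂ E₁.e E₂.e)) (c : Corner E₂) :
    mulT₁₂Corner hT hT₁₂ c (t₁₂ p a) = t₁₂ p (cmul a c) := by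
  simp only [mulT₁₂Corner, AddMonoidHom.comp_apply, inclT₁₂_tmul,
    DistribSMul.toAddMonoidHom_apply, ← ht_smul, projT₁₂_tmul]
  refine congrArg _ (Subtype.ext ?_)
  change a.1 * c.1 * E₂.e = a.1 * c.1
  rw [mul_assoc, c.2.2]

noncomputable def mulT₁₂Hom (h : P →ₗ[(Corner E₁)ᵐᵒᵖ] ↥(cornerSet₂ E₂.e E₁.e)) :
    T₁₂ →+ Module.End (Corner E₁)ᵐᵒᵖ P :=
  AddMonoidHom.mk'
    (fun u =>
      { toFun q := projP hT (op (h q).1 • inclT₁₂ hT₁₂ hT.isBalanced u)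
        map_add' q q' := by rw [map_add, AddMemClass.coe_add, op_add, add_smul, map_add]
        map_smul' r q := by
          rw [map_smul h r q]
          change projP hT (op ((h q).1 * r.unop.1) • inclT₁₂ hT₁₂ hT.isBalanced u) =
            op r.unop • projP hT (op (h q).1 • inclT₁₂ hT₁₂ hT.isBalanced u)
          rw [← projP_op_smul hT ht_smul, op_mul, mul_smul] })
    fun u v => LinearMap.ext fun q => by
      simp only [map_add, smul_add, LinearMap.coe_mk, AddHom.coe_mk, LinearMap.add_apply]

theorem mulT₁₂Hom_tmul (p : P) (a : ↥(cornerSet₂ E₁.e E₂.e))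
    (h : P →ₗ[(Corner E₁)ᵐᵒᵖ] ↥(cornerSet₂ E₂.e E₁.e)) (q : P) :
    mulT₁₂Hom hT hT₁₂ ht_smul h (t₁₂ p a) q = op (show Corner E₁ from cmul a (h q)) • p := by
  change projP hT (op (h q).1 • inclT₁₂ hT₁₂ hT.isBalanced (t₁₂ p a)) = _
  rw [inclT₁₂_tmul, ← ht_smul, projP_tmul]
  refine congrArg (op · • p) (Subtype.ext ?_)
  change a.1 * (h q).1 * E₁.e = a.1 * (h q).1
  rw [mul_assoc, (h q).2.2]

noncomputable def mulHomT₁₂ (h : P →ₗ[(Corner E₁)ᵐᵒᵖ] ↥(cornerSet₂ E₂.e E₁.e)) :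
    T₁₂ →+ Corner E₂ :=
  AddMonoidHom.mk'
    (fun u => ⟨(tensorEval hT ht_smul h (inclT₁₂ hT₁₂ hT.isBalanced u)).1,
      mem_cornerSet₂_of_op_smul_eq E₂ <| by rw [← map_smul, op_smul_inclT₁₂ hT hT₁₂ ht_smul]⟩)
    fun u v => Subtype.ext <| by simp only [map_add, Submodule.coe_add]; rfl

theorem mulHomT₁₂_tmul (h : P →ₗ[(Corner E₁)ᵐᵒᵖ] ↥(cornerSet₂ E₂.e E₁.e)) (p : P)
    (a : ↥(cornerSet₂ E₁.e E₂.e)) :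
    mulHomT₁₂ hT hT₁₂ ht_smul h (t₁₂ p a) = (show Corner E₂ from cmul (h p) a) :=
  Subtype.ext <| by
    change (tensorEval hT ht_smul h (inclT₁₂ hT₁₂ hT.isBalanced (t₁₂ p a))).1 = _
    rw [inclT₁₂_tmul, tensorEval_tmul]
    rfl

theorem toMatrix_ofMatrix_mul_ofMatrix
    (a b : Module.End (Corner E₁)ᵐᵒᵖ P × T₁₂ ×
      (P →ₗ[(Corner E₁)ᵐᵒᵖ] ↥(cornerSet₂ E₂.e E₁.e)) × Corner E₂) :
    toMatrix hT hT₁₂ ht_smul (ofMatrix hT hT₁₂ ht_smul a * ofMatrix hT hT₁₂ ht_smul b) =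
      (a.1 * b.1 + mulT₁₂Hom hT hT₁₂ ht_smul b.2.2.1 a.2.1,
        mulEndT₁₂ hT hT₁₂ ht_smul a.1 b.2.1 + mulT₁₂Corner hT hT₁₂ b.2.2.2 a.2.1,
        a.2.2.1 ∘ₗ b.1 + cmulLeft a.2.2.2 E₁ ∘ₗ b.2.2.1,
        mulHomT₁₂ hT hT₁₂ ht_smul a.2.2.1 b.2.1 + a.2.2.2 * b.2.2.2) := by
  have h₁ (p : P) :
      (ofMatrix hT hT₁₂ ht_smul a * ofMatrix hT hT₁₂ ht_smul b) (t p E₁.toRightIdeal, 0) =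
        ofMatrix hT hT₁₂ ht_smul a
          (t (b.1 p) E₁.toRightIdeal, ⟨(b.2.2.1 p).1, (b.2.2.1 p).2.1⟩) := by
    rw [Module.End.mul_apply, ofMatrix_apply_inl]
  have h₂ :
      (ofMatrix hT hT₁₂ ht_smul a * ofMatrix hT hT₁₂ ht_smul b) (0, E₂.toRightIdeal) =
        ofMatrix hT hT₁₂ ht_smul a
          (inclT₁₂ hT₁₂ hT.isBalanced b.2.1, ⟨b.2.2.2.1, b.2.2.2.2.1⟩) := by
    rw [Module.End.mul_apply, ofMatrix_apply_inr]
  refine Prod.ext (LinearMap.ext fun p => ?_) <|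
    Prod.ext ?_ <| Prod.ext (LinearMap.ext fun p => ?_) ?_
  · simp [toMatrix, h₁, ofMatrix_apply, tensorMap_tmul, projP_tmul_toRightIdeal, mulT₁₂Hom]
  · simp [toMatrix, h₂, ofMatrix_apply, mulEndT₁₂, mulT₁₂Corner]
  · refine Subtype.ext ?_
    simp only [toMatrix, homOfLinearMap_apply_val, LinearMap.comp_apply, LinearMap.inl_apply, h₁,
      ofMatrix_apply, LinearMap.snd_apply, tensorEval_tmul, cornerLeftMul_toRightIdeal]
    rfl
  · exact Subtype.ext (by simp only [toMatrix, h₂, ofMatrix_apply]; rfl)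

noncomputable def matrixEquiv :
    Module.End Aᵐᵒᵖ (T × ↥(rightIdealOf E₂.e)) ≃+
      Module.End (Corner E₁)ᵐᵒᵖ P × T₁₂ × (P →ₗ[(Corner E₁)ᵐᵒᵖ] ↥(cornerSet₂ E₂.e E₁.e)) ×
        Corner E₂ where
  toFun := toMatrix hT hT₁₂ ht_smul
  invFun := ofMatrix hT hT₁₂ ht_smul
  left_inv := ofMatrix_toMatrix hT hT₁₂ ht_smul
  right_inv := toMatrix_ofMatrix hT hT₁₂ ht_smul
  map_add' := toMatrix_add hT hT₁₂ ht_smul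

end MatrixForm

theorem endomorphism_ring_matrix_form_general
    (E₁ E₂ : Idem A)
    -- `P`, a progenerator of `Mod-A₁₁`:
    (P : Type*) [AddCommGroup P] [Module (Corner E₁)ᵐᵒᵖ P]
    -- `T = P ⊗_{A₁₁} e₁A`, a right `A`-module, presented by its universal property:
    (T : Type*) [AddCommGroup T] [Module Aᵐᵒᵖ T]
    (t : P → ↥(rightIdealOf E₁.e) → T)
    (ht_addl : ∀ p p' x, t (p + p') x = t p x + t p' x)
    (ht_addr : ∀ p x x', t p (x + x') = t p x + t p x')
    (ht_bal : ∀ (p : P) (c : Corner E₁) (x : ↥(rightIdealOf E₁.e)),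
      t (op c • p) x = t p (c • x))
    (ht_smul : ∀ (p : P) (a : Aᵐᵒᵖ) (x : ↥(rightIdealOf E₁.e)),
      t p (a • x) = a • t p x)
    (ht_univ : ∀ (X : Type w) (_ : AddCommGroup X) (b : P → ↥(rightIdealOf E₁.e) → X),
      (∀ p p' x, b (p + p') x = b p x + b p' x) →
      (∀ p x x', b p (x + x') = b p x + b p x') →
      (∀ (p : P) (c : Corner E₁) (x : ↥(rightIdealOf E₁.e)),
        b (op c • p) x = b p (c • x)) →
      ∃! g : T →+ X, ∀ p x, g (t p x) = b p x)
    -- `T₁₂ = P ⊗_{A₁₁} A₁₂`, presented by its universal property: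
    (T₁₂ : Type*) [AddCommGroup T₁₂]
    (t₁₂ : P → ↥(cornerSet₂ E₁.e E₂.e) → T₁₂)
    (ht₁₂_addl : ∀ p p' a, t₁₂ (p + p') a = t₁₂ p a + t₁₂ p' a)
    (ht₁₂_addr : ∀ p a a', t₁₂ p (a + a') = t₁₂ p a + t₁₂ p a')
    (ht₁₂_bal : ∀ (p : P) (c : Corner E₁) (a : ↥(cornerSet₂ E₁.e E₂.e)),
      t₁₂ (op c • p) a = t₁₂ p (cmul c a))
    (ht₁₂_univ : ∀ (X : Type w') (_ : AddCommGroup X)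
      (b : P → ↥(cornerSet₂ E₁.e E₂.e) → X),
      (∀ p p' a, b (p + p') a = b p a + b p' a) →
      (∀ p a a', b p (a + a') = b p a + b p a') →
      (∀ (p : P) (c : Corner E₁) (a : ↥(cornerSet₂ E₁.e E₂.e)),
        b (op c • p) a = b p (cmul c a)) →
      ∃! g : T₁₂ →+ X, ∀ p a, g (t₁₂ p a) = b p a) :
    -- conclusion: `End_A(P♯)` is the generalized matrix ring
    ∃ (m₁₁₁₂ : Module.End (Corner E₁)ᵐᵒᵖ P → T₁₂ → T₁₂)
      (m₁₂₂₁ : T₁₂ → (P →ₗ[(Corner E₁)ᵐᵒᵖ] ↥(cornerSet₂ E₂.e E₁.e)) →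
        Module.End (Corner E₁)ᵐᵒᵖ P)
      (m₁₂₂₂ : T₁₂ → Corner E₂ → T₁₂)
      (m₂₁₁₂ : (P →ₗ[(Corner E₁)ᵐᵒᵖ] ↥(cornerSet₂ E₂.e E₁.e)) → T₁₂ → Corner E₂)
      (m₂₂₂₁ : Corner E₂ → (P →ₗ[(Corner E₁)ᵐᵒᵖ] ↥(cornerSet₂ E₂.e E₁.e)) →
        (P →ₗ[(Corner E₁)ᵐᵒᵖ] ↥(cornerSet₂ E₂.e E₁.e))),
      -- the natural composition pairings, characterized on generators:
      (∀ g u v, m₁₁₁₂ g (u + v) = m₁₁₁₂ g u + m₁₁₁₂ g v) ∧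
      (∀ g p a, m₁₁₁₂ g (t₁₂ p a) = t₁₂ (g p) a) ∧
      (∀ u v g, m₁₂₂₁ (u + v) g = m₁₂₂₁ u g + m₁₂₂₁ v g) ∧
      (∀ p a g q, (m₁₂₂₁ (t₁₂ p a) g) q = op (show Corner E₁ from cmul a (g q)) • p) ∧
      (∀ u v c, m₁₂₂₂ (u + v) c = m₁₂₂₂ u c + m₁₂₂₂ v c) ∧
      (∀ p a c, m₁₂₂₂ (t₁₂ p a) c = t₁₂ p (cmul a c)) ∧
      (∀ g u v, m₂₁₁₂ g (u + v) = m₂₁₁₂ g u + m₂₁₁₂ g v) ∧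
      (∀ g p a, m₂₁₁₂ g (t₁₂ p a) = (show Corner E₂ from cmul (g p) a)) ∧
      (∀ c g q, (m₂₂₂₁ c g) q = cmul c (g q)) ∧
      -- the additive isomorphism, multiplicative for the matrix product:
      ∃ Ψ : Module.End Aᵐᵒᵖ (T × ↥(rightIdealOf E₂.e)) ≃+
          (Module.End (Corner E₁)ᵐᵒᵖ P × T₁₂ ×
            (P →ₗ[(Corner E₁)ᵐᵒᵖ] ↥(cornerSet₂ E₂.e E₁.e)) × Corner E₂),
        ∀ x y,
          Ψ (x * y) =
            ((Ψ x).1 * (Ψ y).1 + m₁₂₂₁ (Ψ x).2.1 (Ψ y).2.2.1,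
             m₁₁₁₂ (Ψ x).1 (Ψ y).2.1 + m₁₂₂₂ (Ψ x).2.1 (Ψ y).2.2.2,
             (Ψ x).2.2.1 ∘ₗ (Ψ y).1 + m₂₂₂₁ (Ψ x).2.2.2 (Ψ y).2.2.1,
             m₂₁₁₂ (Ψ x).2.2.1 (Ψ y).2.1 + (Ψ x).2.2.2 * (Ψ y).2.2.2) := by
  have hT : IsBalancedTensor (Corner E₁) t := IsBalanced.isBalancedTensor
    ⟨ht_addl, ht_addr, ht_bal⟩ fun X _ b hb => ht_univ X _ b hb.1 hb.2 hb.3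
  have hT₁₂ : IsBalancedTensor (Corner E₁) t₁₂ := IsBalanced.isBalancedTensor
    ⟨ht₁₂_addl, ht₁₂_addr, ht₁₂_bal⟩ fun X _ b hb => ht₁₂_univ X _ b hb.1 hb.2 hb.3
  refine ⟨fun g u => mulEndT₁₂ hT hT₁₂ ht_smul g u, fun u h => mulT₁₂Hom hT hT₁₂ ht_smul h u,
    fun u c => mulT₁₂Corner hT hT₁₂ c u, fun h u => mulHomT₁₂ hT hT₁₂ ht_smul h u,
    fun c h => cmulLeft c E₁ ∘ₗ h, fun g => map_add _, mulEndT₁₂_tmul hT hT₁₂ ht_smul,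
    fun u v h => map_add _ u v, mulT₁₂Hom_tmul hT hT₁₂ ht_smul, fun u v c => map_add _ u v,
    mulT₁₂Corner_tmul hT hT₁₂ ht_smul, fun h => map_add _, mulHomT₁₂_tmul hT hT₁₂ ht_smul,
    fun c h q => rfl, matrixEquiv hT hT₁₂ ht_smul, fun x y => ?_⟩
  have h := toMatrix_ofMatrix_mul_ofMatrix hT hT₁₂ ht_smul (toMatrix hT hT₁₂ ht_smul x)
    (toMatrix hT hT₁₂ ht_smul y)
  rwa [ofMatrix_toMatrix, ofMatrix_toMatrix] at h

set_option maxHeartbeats 1000000 in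
/-- **Lemma.** Let `A` be a unital ring with orthogonal idempotents `e₁, e₂` summing to `1`,
`A_{ij} = e_iAe_j`, and `P` a progenerator of `Mod-A₁₁`.  Let `T = P ⊗_{A₁₁} e₁A` (a right
`A`-module) and `T₁₂ = P ⊗_{A₁₁} A₁₂`, both presented by their universal properties.  Then
`End_A((P ⊗_{A₁₁} e₁A) ⊕ e₂A)` is isomorphic to the generalized `2×2` matrix ring with
entries `B₁₁ = End_{A₁₁}(P)`, `B₁₂ = P ⊗_{A₁₁} A₁₂`, `B₂₁ = Hom_{A₁₁}(P, A₂₁)`,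
`B₂₂ = A₂₂`, multiplication being given by the natural composition pairings. -/
theorem endomorphism_ring_matrix_form
    (E₁ E₂ : Idem A) (hsum : E₁.e + E₂.e = 1)
    (horth : E₁.e * E₂.e = 0) (horth' : E₂.e * E₁.e = 0)
    -- `P`, a progenerator of `Mod-A₁₁`:
    (P : Type*) [AddCommGroup P] [Module (Corner E₁)ᵐᵒᵖ P]
    [Module.Finite (Corner E₁)ᵐᵒᵖ P] [Module.Projective (Corner E₁)ᵐᵒᵖ P]
    (hgen : ∃ (n : ℕ) (f : (Fin n → P) →ₗ[(Corner E₁)ᵐᵒᵖ] Corner E₁), Function.Surjective f)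
    -- `T = P ⊗_{A₁₁} e₁A`, a right `A`-module, presented by its universal property:
    (T : Type*) [AddCommGroup T] [Module Aᵐᵒᵖ T]
    (t : P → ↥(rightIdealOf E₁.e) → T)
    (ht_addl : ∀ p p' x, t (p + p') x = t p x + t p' x)
    (ht_addr : ∀ p x x', t p (x + x') = t p x + t p x')
    (ht_bal : ∀ (p : P) (c : Corner E₁) (x : ↥(rightIdealOf E₁.e)),
      t (op c • p) x = t p (c • x))
    (ht_smul : ∀ (p : P) (a : Aᵐᵒᵖ) (x : ↥(rightIdealOf E₁.e)),
      t p (a • x) = a • t p x)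
    (ht_univ : ∀ (X : Type w) (_ : AddCommGroup X) (b : P → ↥(rightIdealOf E₁.e) → X),
      (∀ p p' x, b (p + p') x = b p x + b p' x) →
      (∀ p x x', b p (x + x') = b p x + b p x') →
      (∀ (p : P) (c : Corner E₁) (x : ↥(rightIdealOf E₁.e)),
        b (op c • p) x = b p (c • x)) →
      ∃! g : T →+ X, ∀ p x, g (t p x) = b p x)
    -- `T₁₂ = P ⊗_{A₁₁} A₁₂`, presented by its universal property:
    (T₁₂ : Type*) [AddCommGroup T₁₂]
    (t₁₂ : P → ↥(cornerSet₂ E₁.e E₂.e) → T₁₂)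
    (ht₁₂_addl : ∀ p p' a, t₁₂ (p + p') a = t₁₂ p a + t₁₂ p' a)
    (ht₁₂_addr : ∀ p a a', t₁₂ p (a + a') = t₁₂ p a + t₁₂ p a')
    (ht₁₂_bal : ∀ (p : P) (c : Corner E₁) (a : ↥(cornerSet₂ E₁.e E₂.e)),
      t₁₂ (op c • p) a = t₁₂ p (cmul c a))
    (ht₁₂_univ : ∀ (X : Type w') (_ : AddCommGroup X)
      (b : P → ↥(cornerSet₂ E₁.e E₂.e) → X),
      (∀ p p' a, b (p + p') a = b p a + b p' a) →
      (∀ p a a', b p (a + a') = b p a + b p a') →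
      (∀ (p : P) (c : Corner E₁) (a : ↥(cornerSet₂ E₁.e E₂.e)),
        b (op c • p) a = b p (cmul c a)) →
      ∃! g : T₁₂ →+ X, ∀ p a, g (t₁₂ p a) = b p a) :
    -- conclusion: `End_A(P♯)` is the generalized matrix ring
    ∃ (m₁₁₁₂ : Module.End (Corner E₁)ᵐᵒᵖ P → T₁₂ → T₁₂)
      (m₁₂₂₁ : T₁₂ → (P →ₗ[(Corner E₁)ᵐᵒᵖ] ↥(cornerSet₂ E₂.e E₁.e)) →
        Module.End (Corner E₁)ᵐᵒᵖ P)
      (m₁₂₂₂ : T₁₂ → Corner E₂ → T₁₂)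
      (m₂₁₁₂ : (P →ₗ[(Corner E₁)ᵐᵒᵖ] ↥(cornerSet₂ E₂.e E₁.e)) → T₁₂ → Corner E₂)
      (m₂₂₂₁ : Corner E₂ → (P →ₗ[(Corner E₁)ᵐᵒᵖ] ↥(cornerSet₂ E₂.e E₁.e)) →
        (P →ₗ[(Corner E₁)ᵐᵒᵖ] ↥(cornerSet₂ E₂.e E₁.e))),
      -- the natural composition pairings, characterized on generators:
      (∀ g u v, m₁₁₁₂ g (u + v) = m₁₁₁₂ g u + m₁₁₁₂ g v) ∧
      (∀ g p a, m₁₁₁₂ g (t₁₂ p a) = t₁₂ (g p) a) ∧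
      (∀ u v g, m₁₂₂₁ (u + v) g = m₁₂₂₁ u g + m₁₂₂₁ v g) ∧
      (∀ p a g q, (m₁₂₂₁ (t₁₂ p a) g) q = op (show Corner E₁ from cmul a (g q)) • p) ∧
      (∀ u v c, m₁₂₂₂ (u + v) c = m₁₂₂₂ u c + m₁₂₂₂ v c) ∧
      (∀ p a c, m₁₂₂₂ (t₁₂ p a) c = t₁₂ p (cmul a c)) ∧
      (∀ g u v, m₂₁₁₂ g (u + v) = m₂₁₁₂ g u + m₂₁₁₂ g v) ∧
      (∀ g p a, m₂₁₁₂ g (t₁₂ p a) = (show Corner E₂ from cmul (g p) a)) ∧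
      (∀ c g q, (m₂₂₂₁ c g) q = cmul c (g q)) ∧
      -- the additive isomorphism, multiplicative for the matrix product:
      ∃ Ψ : Module.End Aᵐᵒᵖ (T × ↥(rightIdealOf E₂.e)) ≃+
          (Module.End (Corner E₁)ᵐᵒᵖ P × T₁₂ ×
            (P →ₗ[(Corner E₁)ᵐᵒᵖ] ↥(cornerSet₂ E₂.e E₁.e)) × Corner E₂),
        ∀ x y,
          Ψ (x * y) =
            ((Ψ x).1 * (Ψ y).1 + m₁₂₂₁ (Ψ x).2.1 (Ψ y).2.2.1,
             m₁₁₁₂ (Ψ x).1 (Ψ y).2.1 + m₁₂₂₂ (Ψ x).2.1 (Ψ y).2.2.2,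
             (Ψ x).2.2.1 ∘ₗ (Ψ y).1 + m₂₂₂₁ (Ψ x).2.2.2 (Ψ y).2.2.1,
             m₂₁₁₂ (Ψ x).2.2.1 (Ψ y).2.1 + (Ψ x).2.2.2 * (Ψ y).2.2.2) :=
  endomorphism_ring_matrix_form_general E₁ E₂ P T t ht_addl ht_addr ht_bal ht_smul ht_univ T₁₂ t₁₂
    ht₁₂_addl ht₁₂_addr ht₁₂_bal ht₁₂_univ
end
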